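/- Let F_t be a one-parameter affine family on ℝ^d with t_0 = 1/ρ(F). Then the map t ↦ A_t, from the interval (0, t_0) to the space of nonempty compact subsets of ℝ^d equipped with the Hausdorff metric, is continuous. -/

import Mathlib

open Metric Filter Set
open scoped RealInnerProductSpace

noncomputable section

/-- The Hutchinson operator associated with a family of maps. -/
def hutch {ι E : Type*} (f : ι → E → E) (K : Set E) : Set E := ⋃ i, f i '' K

/-- `A` is the attractor of the IFS `f`: `A` is a nonempty compact set such that the iterates
of the Hutchinson operator applied to any nonempty compact set converge to `A` in the
Hausdorff metric. -/
def IsAttractor {ι E : Type*} [MetricSpace E] (f : ι → E → E) (A : Set E) : Prop :=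
  A.Nonempty ∧ IsCompact A ∧
    ∀ K : Set E, K.Nonempty → IsCompact K →
      Tendsto (fun n : ℕ => hausdorffDist ((hutch f)^[n] K) A) atTop (nhds 0)

/-- The joint spectral radius of a finite family of continuous linear maps. -/
def jsr {E : Type*} [NormedAddCommGroup E] [NormedSpace ℝ E] {N : ℕ}
    (L : Fin N → E →L[ℝ] E) : ℝ :=
  limsup (fun k : ℕ =>
    (⨆ σ : Fin k → Fin N, ‖(List.ofFn fun j : Fin k => L (σ j)).prod‖) ^ ((1 : ℝ) / (k : ℝ)))
    atTop

/-- The one-parameter affine family `f_{(i,t)}(x) = t • f_i(x) + q_i` where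
`f_i(x) = L_i x + a_i`. -/
def fam {E : Type*} [NormedAddCommGroup E] [NormedSpace ℝ E] {N : ℕ}
    (L : Fin N → E →L[ℝ] E) (a q : Fin N → E) (t : ℝ) (i : Fin N) (x : E) : E :=
  t • (L i x + a i) + q i

/-- The family is linear: every `f_{(i,t)}`, `t ∈ [0, t₀)`, is conjugate to a linear map by a
single invertible affine map `h` independent of `i` and `t`. -/
def IsLinearFamily {E : Type*} [NormedAddCommGroup E] [NormedSpace ℝ E] {N : ℕ}
    (L : Fin N → E →L[ℝ] E) (a q : Fin N → E) : Prop :=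
  ∃ h : E ≃ᵃ[ℝ] E, ∀ i : Fin N, ∀ t : ℝ, 0 ≤ t → t < 1 / jsr L →
    ∃ M : E →ₗ[ℝ] E, ∀ x, fam L a q t i x = h.symm (M (h x))

/-- The family is quasi-linear: for each `t ∈ [0, t₀)` there is an invertible affine map `h_t`,
independent of `i`, conjugating every `f_{(i,t)}` to a linear map. -/
def IsQuasiLinearFamily {E : Type*} [NormedAddCommGroup E] [NormedSpace ℝ E] {N : ℕ}
    (L : Fin N → E →L[ℝ] E) (a q : Fin N → E) : Prop :=
  ∀ t : ℝ, 0 ≤ t → t < 1 / jsr L → ∃ h : E ≃ᵃ[ℝ] E, ∀ i : Fin N,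
    ∃ M : E →ₗ[ℝ] E, ∀ x, fam L a q t i x = h.symm (M (h x))

/-- The family is semi-linear: for each `i` there is an invertible affine map `h_i`,
independent of `t`, conjugating `f_{(i,t)}` to a linear map for all `t ∈ [0, t₀)`. -/
def IsSemiLinearFamily {E : Type*} [NormedAddCommGroup E] [NormedSpace ℝ E] {N : ℕ}
    (L : Fin N → E →L[ℝ] E) (a q : Fin N → E) : Prop :=
  ∀ i : Fin N, ∃ h : E ≃ᵃ[ℝ] E, ∀ t : ℝ, 0 ≤ t → t < 1 / jsr L →
    ∃ M : E →ₗ[ℝ] E, ∀ x, fam L a q t i x = h.symm (M (h x))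

/-- The hyperplane `{x | φ x = c}` (with `φ` a nonzero linear functional) separates `S`:
it misses `S` and `S` meets both open half-spaces. -/
def SeparatesHyp {E : Type*} [AddCommGroup E] [Module ℝ E]
    (φ : E →ₗ[ℝ] ℝ) (c : ℝ) (S : Set E) : Prop :=
  φ ≠ 0 ∧ (∀ x ∈ S, φ x ≠ c) ∧ (∃ x ∈ S, φ x < c) ∧ (∃ x ∈ S, c < φ x)

/-- A set is strongly disconnected if some hyperplane separates it. -/
def StronglyDisconnected {E : Type*} [AddCommGroup E] [Module ℝ E] (S : Set E) : Prop :=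
  ∃ (φ : E →ₗ[ℝ] ℝ) (c : ℝ), SeparatesHyp φ c S

/-- A set is weakly connected if no hyperplane separates it. -/
def WeaklyConnected {E : Type*} [AddCommGroup E] [Module ℝ E] (S : Set E) : Prop :=
  ¬ StronglyDisconnected S

/-- A weak component of a compact set `S` is a maximal weakly connected compact subset of `S`. -/
def IsWeakComponent {E : Type*} [NormedAddCommGroup E] [NormedSpace ℝ E]
    (S C : Set E) : Prop :=
  C.Nonempty ∧ C ⊆ S ∧ IsCompact C ∧ WeaklyConnected C ∧
    ∀ C' : Set E, C' ⊆ S → IsCompact C' → WeaklyConnected C' → C ⊆ C' → C' = C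

/-- A (nondegenerate right circular) cone with apex `x`, axis direction `v`, radius `r` and
half-angle `θ`. -/
def coneSet {E : Type*} [NormedAddCommGroup E] [InnerProductSpace ℝ E]
    (x v : E) (r θ : ℝ) : Set E :=
  {y | ‖y - x‖ ≤ r ∧ ‖y - x‖ * Real.cos θ ≤ ⟪y - x, v⟫}

/-- A boundary point `x` of `K` is a cusp of `K` if no cone with apex `x` is contained in `K`. -/
def IsCuspPoint {E : Type*} [NormedAddCommGroup E] [InnerProductSpace ℝ E]
    (K : Set E) (x : E) : Prop :=
  x ∈ frontier K ∧ ∀ (v : E) (r θ : ℝ), ‖v‖ = 1 → 0 < r → 0 < θ → θ < Real.pi / 2 →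
    ¬ coneSet x v r θ ⊆ K

/-- The one-parameter family is tame: whenever the attractor `A_t` has nonempty interior,
some fixed point of a map of `F_t` is not a cusp of `A_t`. -/
def TameFamily {E : Type*} [NormedAddCommGroup E] [InnerProductSpace ℝ E] {N : ℕ}
    (L : Fin N → E →L[ℝ] E) (a q : Fin N → E) : Prop :=
  ∀ t : ℝ, 0 ≤ t → t < 1 / jsr L → ∀ A : Set E, IsAttractor (fam L a q t) A →
    (interior A).Nonempty → ∃ (i : Fin N) (x : E), fam L a q t i x = x ∧ ¬ IsCuspPoint A x

end

/-!
Fix `t < s < t₀`. Since `s · ρ(F) < 1`, for some length `k` every product of `k` of the `L_i` has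
norm `< s⁻ᵏ`, so all words of length `k` in the maps of `F_u` are `c`-contractions with one
`c < 1` for every `u ≤ s`. Each attractor `A_u` is fixed by the Hutchinson operator of these
words, and comparing the two fixed-point equations gives
`d_H(A_u, A_t) ≤ c · d_H(A_u, A_t) + D(u)`, where `D(u)` bounds how far the words of `F_u` move
the points of `A_t` away from those of `F_t`. Joint continuity in `(u, x)` and compactness of
`A_t` make `D(u) → 0` as `u → t`.
-/

open scoped NNReal

section Hutchinson

variable {ι α : Type*}

lemma hutch_nonempty [Nonempty ι] (f : ι → α → α) {K : Set α} (hK : K.Nonempty) :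
    (hutch f K).Nonempty :=
  let ⟨x, hx⟩ := hK
  ⟨f (Classical.arbitrary ι) x, mem_iUnion.2 ⟨_, mem_image_of_mem _ hx⟩⟩

lemma isCompact_hutch [TopologicalSpace α] [Finite ι] {f : ι → α → α}
    (hf : ∀ i, Continuous (f i)) {K : Set α} (hK : IsCompact K) : IsCompact (hutch f K) :=
  isCompact_iUnion fun i => hK.image (hf i)

lemma hutch_iterate_nonempty [Nonempty ι] (f : ι → α → α) {K : Set α} (hK : K.Nonempty)
    (n : ℕ) : ((hutch f)^[n] K).Nonempty := by
  induction n with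
  | zero => exact hK
  | succ n ih => rw [Function.iterate_succ_apply']; exact hutch_nonempty f ih

lemma isCompact_hutch_iterate [TopologicalSpace α] [Finite ι] {f : ι → α → α}
    (hf : ∀ i, Continuous (f i)) {K : Set α} (hK : IsCompact K) (n : ℕ) :
    IsCompact ((hutch f)^[n] K) := by
  induction n with
  | zero => exact hK
  | succ n ih => rw [Function.iterate_succ_apply']; exact isCompact_hutch hf ih

variable [MetricSpace α]

lemma hausdorffDist_hutch_le {g g' : ι → α → α} {K K' : Set α} (hK : K.Nonempty)
    (hKc : IsCompact K) (hK' : K'.Nonempty) (hK'c : IsCompact K') {c : ℝ≥0} {D : ℝ}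
    (hD : 0 ≤ D) (hg : ∀ j, LipschitzWith c (g j))
    (hgg' : ∀ j, ∀ x ∈ K', dist (g j x) (g' j x) ≤ D) :
    hausdorffDist (hutch g K) (hutch g' K') ≤ c * hausdorffDist K K' + D := by
  have hfin : hausdorffEDist K K' ≠ ⊤ :=
    hausdorffEDist_ne_top_of_nonempty_of_bounded hK hK' hKc.isBounded hK'c.isBounded
  have hcd : 0 ≤ c * hausdorffDist K K' := mul_nonneg c.2 hausdorffDist_nonneg
  apply hausdorffDist_le_of_mem_dist (by positivity)
  · simp only [hutch, mem_iUnion, mem_image]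
    rintro _ ⟨j, y, hy, rfl⟩
    obtain ⟨y', hy', hyy'⟩ := hK'c.exists_infDist_eq_dist hK' y
    refine ⟨g' j y', ⟨j, y', hy', rfl⟩, ?_⟩
    have hdist : dist y y' ≤ hausdorffDist K K' :=
      hyy' ▸ infDist_le_hausdorffDist_of_mem hy hfin
    calc dist (g j y) (g' j y')
        ≤ dist (g j y) (g j y') + dist (g j y') (g' j y') := dist_triangle _ _ _
      _ ≤ c * hausdorffDist K K' + D :=
        add_le_add (((hg j).dist_le_mul y y').trans (by gcongr)) (hgg' j y' hy')
  · simp only [hutch, mem_iUnion, mem_image]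
    rintro _ ⟨j, y', hy', rfl⟩
    obtain ⟨y, hy, hy'y⟩ := hKc.exists_infDist_eq_dist hK y'
    refine ⟨g j y, ⟨j, y, hy, rfl⟩, ?_⟩
    have hdist : dist y' y ≤ hausdorffDist K K' := by
      rw [← hy'y, hausdorffDist_comm]
      exact infDist_le_hausdorffDist_of_mem hy' (by rwa [hausdorffEDist_comm])
    calc dist (g' j y') (g j y)
        ≤ dist (g' j y') (g j y') + dist (g j y') (g j y) := dist_triangle _ _ _
      _ ≤ D + c * hausdorffDist K K' :=
        add_le_add (dist_comm (g j y') _ ▸ hgg' j y' hy')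
          (((hg j).dist_le_mul y' y).trans (by gcongr))
      _ = c * hausdorffDist K K' + D := add_comm _ _

lemma hausdorffDist_le_of_hutch_eq {g g' : ι → α → α} {A A' : Set α} (hA : A.Nonempty)
    (hAc : IsCompact A) (hA' : A'.Nonempty) (hA'c : IsCompact A') {c : ℝ≥0} (hc : c < 1)
    (hg : ∀ j, LipschitzWith c (g j)) (hgA : hutch g A = A) (hg'A' : hutch g' A' = A')
    {D : ℝ} (hD : 0 ≤ D) (hgg' : ∀ j, ∀ x ∈ A', dist (g j x) (g' j x) ≤ D) :
    hausdorffDist A A' ≤ D / (1 - c) := by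
  have h := hausdorffDist_hutch_le hA hAc hA' hA'c hD hg hgg'
  rw [hgA, hg'A'] at h
  have hc' : (c : ℝ) < 1 := hc
  rw [le_div_iff₀ (by linarith)]
  linarith

lemma IsAttractor.hutch_eq [Nonempty ι] [Finite ι] {f : ι → α → α} {K : ι → ℝ≥0}
    (hK : ∀ i, LipschitzWith (K i) (f i)) {A : Set α} (hA : IsAttractor f A) : hutch f A = A := by
  obtain ⟨hne, hcomp, htend⟩ := hA
  obtain ⟨c, hKc⟩ := Finite.exists_le K
  have hf : ∀ i, LipschitzWith c (f i) := fun i => (hK i).weaken (hKc i)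
  have hcont : ∀ i, Continuous (f i) := fun i => (hf i).continuous
  have hH : (hutch f A).Nonempty := hutch_nonempty f hne
  have hHc : IsCompact (hutch f A) := isCompact_hutch hcont hcomp
  have hlim := htend A hne hcomp
  have hbound : ∀ n, hausdorffDist A (hutch f A)
      ≤ hausdorffDist ((hutch f)^[n + 1] A) A + c * hausdorffDist ((hutch f)^[n] A) A := by
    intro n
    have hfin : hausdorffEDist A ((hutch f)^[n + 1] A) ≠ ⊤ :=
      hausdorffEDist_ne_top_of_nonempty_of_bounded hne (hutch_iterate_nonempty f hne _)
        hcomp.isBounded (isCompact_hutch_iterate hcont hcomp _).isBounded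
    have hstep : hausdorffDist ((hutch f)^[n + 1] A) (hutch f A)
        ≤ c * hausdorffDist ((hutch f)^[n] A) A + 0 := by
      rw [Function.iterate_succ_apply']
      exact hausdorffDist_hutch_le (hutch_iterate_nonempty f hne n)
        (isCompact_hutch_iterate hcont hcomp n) hne hcomp le_rfl hf (fun j x _ => by simp)
    calc hausdorffDist A (hutch f A)
        ≤ hausdorffDist A ((hutch f)^[n + 1] A)
          + hausdorffDist ((hutch f)^[n + 1] A) (hutch f A) := hausdorffDist_triangle hfin
      _ ≤ _ := by rw [hausdorffDist_comm]; linarith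
  have hto0 : Tendsto (fun n => hausdorffDist ((hutch f)^[n + 1] A) A
      + c * hausdorffDist ((hutch f)^[n] A) A) atTop (nhds 0) := by
    simpa using ((tendsto_add_atTop_iff_nat 1).2 hlim).add (hlim.const_mul (c : ℝ))
  have hzero : hausdorffDist A (hutch f A) = 0 :=
    le_antisymm (ge_of_tendsto' hto0 hbound) hausdorffDist_nonneg
  refine ((hcomp.isClosed.hausdorffDist_zero_iff_eq hHc.isClosed ?_).1 hzero).symm
  exact hausdorffEDist_ne_top_of_nonempty_of_bounded hne hH hcomp.isBounded hHc.isBounded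

end Hutchinson

section Words

variable {ι α : Type*}

/-- `wordMap f σ = f (σ 0) ∘ f (σ 1) ∘ ⋯ ∘ f (σ (k - 1))`. -/
def wordMap (f : ι → α → α) : ∀ {k : ℕ}, (Fin k → ι) → α → α
  | 0, _ => id
  | _ + 1, σ => f (σ 0) ∘ wordMap f (Fin.tail σ)

lemma hutch_iterate_eq_hutch_wordMap (f : ι → α → α) (k : ℕ) (K : Set α) :
    (hutch f)^[k] K = hutch (fun σ : Fin k → ι => wordMap f σ) K := by
  induction k with
  | zero =>
    ext x
    simp only [Function.iterate_zero, id_eq, hutch, mem_iUnion, mem_image, wordMap]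
    exact ⟨fun hx => ⟨Fin.elim0, x, hx, rfl⟩, fun ⟨_, y, hy, hyx⟩ => hyx ▸ hy⟩
  | succ k ih =>
    rw [Function.iterate_succ_apply', ih]
    ext x
    simp only [hutch, mem_iUnion, mem_image]
    constructor
    · rintro ⟨i, _, ⟨σ, y, hy, rfl⟩, rfl⟩
      exact ⟨Fin.cons i σ, y, hy, by simp only [wordMap, Fin.cons_zero, Fin.tail_cons,
        Function.comp_apply]⟩
    · rintro ⟨τ, y, hy, rfl⟩
      exact ⟨τ 0, wordMap f (Fin.tail τ) y, ⟨Fin.tail τ, y, hy, rfl⟩, rfl⟩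

lemma continuous_wordMap {T : Type*} [TopologicalSpace T] [TopologicalSpace α]
    {f : T → ι → α → α} (hf : ∀ i, Continuous fun p : T × α => f p.1 i p.2) :
    ∀ {k : ℕ} (σ : Fin k → ι), Continuous fun p : T × α => wordMap (f p.1) σ p.2
  | 0, _ => continuous_snd
  | _ + 1, σ => (hf (σ 0)).comp (continuous_fst.prodMk (continuous_wordMap hf (Fin.tail σ)))

end Words

lemma IsCompact.eventually_forall_dist_lt {T ι α β : Type*} [TopologicalSpace T]
    [TopologicalSpace α] [PseudoMetricSpace β] [Finite ι] {g : T → ι → α → β}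
    (hg : ∀ j, Continuous fun p : T × α => g p.1 j p.2) {K : Set α} (hK : IsCompact K) (t : T)
    {ε : ℝ} (hε : 0 < ε) : ∀ᶠ u in nhds t, ∀ j, ∀ x ∈ K, dist (g u j x) (g t j x) < ε := by
  refine eventually_all.2 fun j => hK.eventually_forall_of_forall_eventually fun y _ => ?_
  have hcont : Continuous fun p : T × α => dist (g p.1 j p.2) (g t j p.2) :=
    (hg j).dist ((hg j).comp (continuous_const.prodMk continuous_snd))
  exact hcont.continuousAt.eventually_lt continuousAt_const (by simpa using hε)

section JointSpectralRadius

variable {E : Type*} [NormedAddCommGroup E] [NormedSpace ℝ E] {N : ℕ}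
  (L : Fin N → E →L[ℝ] E)

/-- `jsr L` is the `limsup` of the `k`-th roots of `wordNorm L k`. -/
noncomputable def wordNorm (k : ℕ) : ℝ :=
  ⨆ σ : Fin k → Fin N, ‖(List.ofFn fun j : Fin k => L (σ j)).prod‖

lemma wordNorm_nonneg (k : ℕ) : 0 ≤ wordNorm L k :=
  Real.iSup_nonneg fun _ => norm_nonneg _

lemma norm_prod_ofFn_le_wordNorm {k : ℕ} (σ : Fin k → Fin N) :
    ‖(List.ofFn fun j : Fin k => L (σ j)).prod‖ ≤ wordNorm L k :=
  le_ciSup (Finite.bddAbove_range fun σ : Fin k → Fin N =>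
    ‖(List.ofFn fun j : Fin k => L (σ j)).prod‖) σ

variable {L}

lemma norm_prod_ofFn_le_pow {C : ℝ} (hC0 : 0 ≤ C) (hC : ∀ i, ‖L i‖ ≤ C) :
    ∀ {k : ℕ} (σ : Fin k → Fin N), ‖(List.ofFn fun j : Fin k => L (σ j)).prod‖ ≤ C ^ k
  | 0, _ => by
    rw [List.ofFn_zero, List.prod_nil, pow_zero, ContinuousLinearMap.one_def]
    exact ContinuousLinearMap.norm_id_le
  | k + 1, σ => by
    rw [List.ofFn_succ, List.prod_cons, pow_succ']
    exact (norm_mul_le _ _).trans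
      (mul_le_mul (hC _) (norm_prod_ofFn_le_pow hC0 hC (Fin.tail σ)) (norm_nonneg _) hC0)

lemma exists_wordNorm_lt_pow {r : ℝ} (h : jsr L < r) : ∃ k, wordNorm L k < r ^ k := by
  obtain ⟨C, hC1, hC⟩ : ∃ C, 1 ≤ C ∧ ∀ i, ‖L i‖ ≤ C :=
    let ⟨C, hC⟩ := Finite.exists_le fun i => ‖L i‖
    ⟨max C 1, le_max_right _ _, fun i => (hC i).trans (le_max_left _ _)⟩
  have hbdd : IsBoundedUnder (· ≤ ·) atTop fun k : ℕ => wordNorm L k ^ ((1 : ℝ) / k) := by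
    refine isBoundedUnder_of ⟨C, fun k => ?_⟩
    rcases eq_or_ne k 0 with rfl | hk
    · simpa using hC1
    have hle : wordNorm L k ≤ C ^ k :=
      Real.iSup_le (norm_prod_ofFn_le_pow (by linarith) hC) (by positivity)
    calc wordNorm L k ^ ((1 : ℝ) / k) ≤ (C ^ k) ^ ((1 : ℝ) / k) :=
          Real.rpow_le_rpow (wordNorm_nonneg L k) hle (by positivity)
      _ = C := by rw [one_div, Real.pow_rpow_inv_natCast (by linarith) hk]
  obtain ⟨k, hk, hk0⟩ := ((eventually_lt_of_limsup_lt h hbdd).and (eventually_ne_atTop 0)).exists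
  refine ⟨k, ?_⟩
  calc wordNorm L k = (wordNorm L k ^ ((1 : ℝ) / k)) ^ k := by
        rw [one_div, Real.rpow_inv_natCast_pow (wordNorm_nonneg L k) hk0]
    _ < r ^ k := pow_lt_pow_left₀ hk (Real.rpow_nonneg (wordNorm_nonneg L k) _) hk0

end JointSpectralRadius

section AffineFamily

variable {E : Type*} [NormedAddCommGroup E] [NormedSpace ℝ E] {N : ℕ}
  (L : Fin N → E →L[ℝ] E) (a q : Fin N → E)

lemma fam_sub_fam (u : ℝ) (i : Fin N) (x y : E) :
    fam L a q u i x - fam L a q u i y = u • L i (x - y) := by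
  simp only [fam, map_sub, smul_add, smul_sub]
  abel

lemma lipschitzWith_fam (u : ℝ) (i : Fin N) :
    LipschitzWith (‖u‖₊ * ‖L i‖₊) (fam L a q u i) :=
  LipschitzWith.of_dist_le_mul fun x y => by
    rw [dist_eq_norm, dist_eq_norm, fam_sub_fam, norm_smul, NNReal.coe_mul, coe_nnnorm,
      coe_nnnorm, mul_assoc]
    exact mul_le_mul_of_nonneg_left ((L i).le_opNorm _) (norm_nonneg u)

lemma continuous_fam (i : Fin N) : Continuous fun p : ℝ × E => fam L a q p.1 i p.2 := by
  unfold fam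
  fun_prop

lemma wordMap_fam_sub_wordMap_fam (u : ℝ) :
    ∀ {k : ℕ} (σ : Fin k → Fin N) (x y : E),
      wordMap (fam L a q u) σ x - wordMap (fam L a q u) σ y
        = u ^ k • (List.ofFn fun j => L (σ j)).prod (x - y)
  | 0, _, x, y => by simp [wordMap]
  | k + 1, σ, x, y => by
    change fam L a q u (σ 0) (wordMap (fam L a q u) (Fin.tail σ) x)
      - fam L a q u (σ 0) (wordMap (fam L a q u) (Fin.tail σ) y) = _
    rw [fam_sub_fam, wordMap_fam_sub_wordMap_fam u (Fin.tail σ), map_smul, List.ofFn_succ,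
      List.prod_cons, smul_smul, pow_succ']
    rfl

lemma exists_lipschitzWith_wordMap_fam_lt_one {s : ℝ} (hs0 : 0 < s) (hs : s < 1 / jsr L) :
    ∃ (k : ℕ) (c : ℝ≥0), c < 1 ∧
      ∀ u ∈ Icc 0 s, ∀ σ : Fin k → Fin N, LipschitzWith c (wordMap (fam L a q u) σ) := by
  have hρ : 0 < jsr L := one_div_pos.1 (hs0.trans hs)
  obtain ⟨k, hk⟩ := exists_wordNorm_lt_pow ((lt_one_div hs0 hρ).1 hs)
  have hnonneg : 0 ≤ s ^ k * wordNorm L k := mul_nonneg (by positivity) (wordNorm_nonneg L k)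
  refine ⟨k, ⟨s ^ k * wordNorm L k, hnonneg⟩, ?_, fun u hu σ => ?_⟩
  · change s ^ k * wordNorm L k < 1
    calc s ^ k * wordNorm L k < s ^ k * (1 / s) ^ k := by gcongr
      _ = 1 := by rw [← mul_pow, mul_one_div_cancel hs0.ne', one_pow]
  refine LipschitzWith.of_dist_le_mul fun x y => ?_
  rw [dist_eq_norm, dist_eq_norm, wordMap_fam_sub_wordMap_fam, norm_smul, norm_pow,
    Real.norm_of_nonneg hu.1]
  change _ ≤ s ^ k * wordNorm L k * ‖x - y‖
  rw [mul_assoc]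
  gcongr ?_ * ?_
  · exact pow_le_pow_left₀ hu.1 hu.2 k
  · exact (ContinuousLinearMap.le_opNorm _ _).trans
      (by gcongr; exact norm_prod_ofFn_le_wordNorm L σ)

end AffineFamily

theorem stmt1_general {d N : ℕ} (hN : 2 ≤ N)
    (L : Fin N → EuclideanSpace ℝ (Fin d) →L[ℝ] EuclideanSpace ℝ (Fin d))
    (a q : Fin N → EuclideanSpace ℝ (Fin d))
    (A : ℝ → TopologicalSpace.NonemptyCompacts (EuclideanSpace ℝ (Fin d)))
    (hA : ∀ t : ℝ, 0 < t → t < 1 / jsr L → IsAttractor (fam L a q t) (A t : Set (EuclideanSpace ℝ (Fin d)))) :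
    ContinuousOn A (Set.Ioo 0 (1 / jsr L)) := by
  have : Nonempty (Fin N) := ⟨⟨0, by omega⟩⟩
  rintro t ⟨ht0, ht⟩
  obtain ⟨s, hts, hs⟩ := exists_between ht
  obtain ⟨k, c, hc, hcontr⟩ := exists_lipschitzWith_wordMap_fam_lt_one L a q (ht0.trans hts) hs
  have hfix : ∀ u ∈ Ioo 0 (1 / jsr L),
      hutch (fun σ : Fin k → Fin N => wordMap (fam L a q u) σ) (A u) = A u := by
    rintro u ⟨hu0, hu⟩
    rw [← hutch_iterate_eq_hutch_wordMap]
    exact Function.iterate_fixed ((hA u hu0 hu).hutch_eq (lipschitzWith_fam L a q u)) k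
  rw [ContinuousWithinAt, Metric.tendsto_nhds]
  intro ε hε
  have hc' : (c : ℝ) < 1 := hc
  have hδ : 0 < (1 - c) * ε / 2 := half_pos (mul_pos (sub_pos.2 hc') hε)
  have hclose := (A t).isCompact.eventually_forall_dist_lt
    (g := fun u (σ : Fin k → Fin N) => wordMap (fam L a q u) σ)
    (continuous_wordMap (continuous_fam L a q)) t hδ
  filter_upwards [self_mem_nhdsWithin, nhdsWithin_le_nhds (Iio_mem_nhds hts),
    nhdsWithin_le_nhds hclose] with u hu hus hdisp
  rw [Metric.NonemptyCompacts.dist_eq]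
  refine (hausdorffDist_le_of_hutch_eq (A u).nonempty (A u).isCompact (A t).nonempty
    (A t).isCompact hc (hcontr u ⟨hu.1.le, hus.le⟩) (hfix u hu) (hfix t ⟨ht0, ht⟩) hδ.le
    fun σ x hx => (hdisp σ x hx).le).trans_lt ?_
  rw [mul_div_assoc, mul_div_cancel_left₀ _ (sub_pos.2 hc').ne']
  exact half_lt_self hε

/-- For a one-parameter affine family on `ℝ^d`, the map `t ↦ A_t` from
`(0, t₀)` to the space of nonempty compact subsets of `ℝ^d` with the Hausdorff metric is
continuous. -/
theorem stmt1 {d N : ℕ} (hN : 2 ≤ N)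
    (L : Fin N → EuclideanSpace ℝ (Fin d) →L[ℝ] EuclideanSpace ℝ (Fin d))
    (hL : ∀ i, Function.Bijective (L i))
    (a q : Fin N → EuclideanSpace ℝ (Fin d))
    (hρ : 0 < jsr L)
    (A : ℝ → TopologicalSpace.NonemptyCompacts (EuclideanSpace ℝ (Fin d)))
    (hA : ∀ t : ℝ, 0 < t → t < 1 / jsr L → IsAttractor (fam L a q t) (A t : Set (EuclideanSpace ℝ (Fin d)))) :
    ContinuousOn A (Set.Ioo 0 (1 / jsr L)) :=
  stmt1_general hN L a q A hA
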